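/- arXiv:2006.11970 — 2 statements merged into one kernel-verified Lean document; each statement's English description precedes it below -/
import Mathlib

section
/- Let A be an ancestral set in a DAG G that is a Bayesian network for X = (X_1,...,X_d), and suppose E[Var(X_j | pa(j))] = σ² for all j. Then for any j ∉ A with pa(j) ⊆ A, E[Var(X_j | X_A)] = σ². -/
open MeasureTheory ProbabilityTheory

/-- The σ-algebra generated by the variables `X i` for `i ∈ S`. -/
noncomputable def tupleAlg {Ω : Type*} [MeasurableSpace Ω] {d : ℕ}
    (X : Fin d → Ω → ℝ) (S : Finset (Fin d)) : MeasurableSpace Ω :=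
  MeasurableSpace.comap (fun ω (i : S) => X i ω) (by infer_instance)

/-- The residual variance `E[Var(X_j | X_S)]`. -/
noncomputable def resVar {Ω : Type*} [MeasurableSpace Ω] (μ : Measure Ω) {d : ℕ}
    (X : Fin d → Ω → ℝ) (S : Finset (Fin d)) (j : Fin d) : ℝ :=
  ∫ ω, (μ[(fun ω' => (X j ω' - (μ[X j | tupleAlg X S]) ω') ^ 2) | tupleAlg X S]) ω ∂μ

/-- `i` is a descendant of `j` in the DAG with parent map `pa` (directed path `j → ⋯ → i`). -/
def IsDesc {d : ℕ} (pa : Fin d → Finset (Fin d)) (j i : Fin d) : Prop :=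
  Relation.TransGen (fun a b => a ∈ pa b) j i

/-- The Markov condition, in the form used in the paper: conditioning `X_j` on any set of
its nondescendants containing its parents is the same as conditioning on its parents. -/
def MarkovCond {Ω : Type*} [MeasurableSpace Ω] (μ : Measure Ω) {d : ℕ}
    (X : Fin d → Ω → ℝ) (pa : Fin d → Finset (Fin d)) : Prop :=
  ∀ (j : Fin d) (S : Finset (Fin d)), pa j ⊆ S →
    (∀ i ∈ S, i ≠ j ∧ ¬ IsDesc pa j i) →
    ∀ φ : ℝ → ℝ, Measurable φ → Integrable (fun ω => φ (X j ω)) μ →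
      μ[(fun ω => φ (X j ω)) | tupleAlg X S] =ᵐ[μ] μ[(fun ω => φ (X j ω)) | tupleAlg X (pa j)]

/-!
The residual variance `E[Var(X_j | X_S)]` equals `E[(X_j - E[X_j | X_S])²]`, so it only depends
on the conditional mean `E[X_j | X_S]`. An ancestral set `A` avoiding `j` consists of
nondescendants of `j`, so when `pa(j) ⊆ A` the Markov condition (applied to `φ = id`) gives
`E[X_j | X_A] = E[X_j | X_pa(j)]`, and the two residual variances coincide.
-/

section Ancestral

variable {d : ℕ} {pa : Fin d → Finset (Fin d)} {A : Finset (Fin d)}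

theorem IsDesc.mem_of_mem_of_ancestral (hA : ∀ i ∈ A, pa i ⊆ A) {j i : Fin d}
    (hji : IsDesc pa j i) (hi : i ∈ A) : j ∈ A := by
  induction hji with
  | single hj => exact hA _ hi hj
  | tail _ hk ih => exact ih (hA _ hi hk)

theorem ne_and_not_isDesc_of_ancestral (hA : ∀ i ∈ A, pa i ⊆ A) {j : Fin d} (hj : j ∉ A) :
    ∀ i ∈ A, i ≠ j ∧ ¬ IsDesc pa j i := fun _ hi =>
  ⟨fun hij => hj (hij ▸ hi), fun hji => hj (hji.mem_of_mem_of_ancestral hA hi)⟩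

end Ancestral

section ResidualVariance

variable {Ω : Type*} [MeasurableSpace Ω] {μ : Measure Ω} {d : ℕ} {X : Fin d → Ω → ℝ}

theorem tupleAlg_le (hX : ∀ i, Measurable (X i)) (S : Finset (Fin d)) :
    tupleAlg X S ≤ ‹MeasurableSpace Ω› :=
  Measurable.comap_le (measurable_pi_lambda _ fun i => hX i)

theorem resVar_eq_integral_sq [IsFiniteMeasure μ] (hX : ∀ i, Measurable (X i))
    (S : Finset (Fin d)) (j : Fin d) :
    resVar μ X S j = ∫ ω, (X j ω - (μ[X j | tupleAlg X S]) ω) ^ 2 ∂μ :=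
  integral_condExp (tupleAlg_le hX S)

theorem resVar_eq_of_condExp_ae_eq [IsFiniteMeasure μ] (hX : ∀ i, Measurable (X i))
    {S T : Finset (Fin d)} {j : Fin d}
    (h : μ[X j | tupleAlg X S] =ᵐ[μ] μ[X j | tupleAlg X T]) :
    resVar μ X S j = resVar μ X T j := by
  rw [resVar_eq_integral_sq hX, resVar_eq_integral_sq hX]
  refine integral_congr_ae ?_
  filter_upwards [h] with ω hω
  rw [hω]

end ResidualVariance

theorem MarkovCond.condExp_ae_eq {Ω : Type*} [MeasurableSpace Ω] {μ : Measure Ω} {d : ℕ}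
    {X : Fin d → Ω → ℝ} {pa : Fin d → Finset (Fin d)} (hMarkov : MarkovCond μ X pa)
    {j : Fin d} {S : Finset (Fin d)} (hpa : pa j ⊆ S)
    (hS : ∀ i ∈ S, i ≠ j ∧ ¬ IsDesc pa j i) (hXj : Integrable (X j) μ) :
    μ[X j | tupleAlg X S] =ᵐ[μ] μ[X j | tupleAlg X (pa j)] :=
  hMarkov j S hpa hS id measurable_id hXj

theorem resVar_ancestral_eq_general
    {Ω : Type*} [MeasurableSpace Ω] (μ : Measure Ω) [IsProbabilityMeasure μ]
    {d : ℕ} (X : Fin d → Ω → ℝ) (hX : ∀ j, Measurable (X j))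
    (hL2 : ∀ j, MemLp (X j) 2 μ)
    (pa : Fin d → Finset (Fin d))
    (hMarkov : MarkovCond μ X pa)
    (σ2 : ℝ) (hres : ∀ j, resVar μ X (pa j) j = σ2)
    (A : Finset (Fin d)) (hA : ∀ i ∈ A, pa i ⊆ A)
    (j : Fin d) (hj : j ∉ A) (hpa : pa j ⊆ A) :
    resVar μ X A j = σ2 := by
  have hmean : μ[X j | tupleAlg X A] =ᵐ[μ] μ[X j | tupleAlg X (pa j)] :=
    hMarkov.condExp_ae_eq hpa (ne_and_not_isDesc_of_ancestral hA hj)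
      ((hL2 j).integrable one_le_two)
  rw [resVar_eq_of_condExp_ae_eq hX hmean, hres j]

/-- If `A` is an ancestral set in a DAG `G` which is a Bayesian network for `X`, the
residual variances `E[Var(X_j | pa(j))]` are all equal to `σ²`, `j ∉ A` and `pa(j) ⊆ A`,
then `E[Var(X_j | X_A)] = σ²`. -/
theorem resVar_ancestral_eq
    {Ω : Type*} [MeasurableSpace Ω] (μ : Measure Ω) [IsProbabilityMeasure μ]
    {d : ℕ} (X : Fin d → Ω → ℝ) (hX : ∀ j, Measurable (X j))
    (hL2 : ∀ j, MemLp (X j) 2 μ)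
    (pa : Fin d → Finset (Fin d))
    (hacyc : ∀ j, ¬ IsDesc pa j j)
    (hMarkov : MarkovCond μ X pa)
    (σ2 : ℝ) (hres : ∀ j, resVar μ X (pa j) j = σ2)
    (A : Finset (Fin d)) (hA : ∀ i ∈ A, pa i ⊆ A)
    (j : Fin d) (hj : j ∉ A) (hpa : pa j ⊆ A) :
    resVar μ X A j = σ2 :=
  resVar_ancestral_eq_general μ X hX hL2 pa hMarkov σ2 hres A hA j hj hpa
end

section
/- In the model of the previous statement but with Var(z₃) = 1/3 instead of 1/2, the identifiability condition fails at the second step: E[Var(X₃|X₁)] = 1/3 + 1/3 − 1/81 < 2/3 = E[Var(X₂|X₁)], so the minimum-residual-variance procedure selects X₃ before X₂ and returns an incorrect topological order. -/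
/-!
With `X₁ = Z`, `X₂ = Z² / 2 + U` and `X₃ = X₂² / 3 + W`, the residual of `X₂` given `X₁` is the
noise `U`, so `E[Var(X₂ | X₁)] = Var U = 2/3`. For `X₃`, `E[X₃ | X₁] = Z⁴ / 12 + Var U / 3`, and
the residual `Z² U / 3 + (U² - Var U) / 3 + W` is a sum of three pairwise orthogonal terms
(independence, and the odd Gaussian moments vanish) with second moments
`E[Z⁴] Var U / 9 = 2/9`, `Var(U²) / 9 = 8/81` and `Var W = 1/3`.
The Gaussian moments come from the integration by parts recursion
`E[X^(n+2)] = (n+1) v E[X^n]` for `X ~ N(0, v)`.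
-/

open MeasureTheory ProbabilityTheory Real
open scoped NNReal ENNReal

/-- Expected conditional variance `E[Var(Y | W)]`. -/
noncomputable def eCondVar {Ω : Type*} [MeasurableSpace Ω] (μ : Measure Ω) {β : Type*}
    [MeasurableSpace β] (Y : Ω → ℝ) (W : Ω → β) : ℝ :=
  ∫ ω, (μ[(fun ω' =>
      (Y ω' - (μ[Y | MeasurableSpace.comap W (by infer_instance)]) ω') ^ 2)
    | MeasurableSpace.comap W (by infer_instance)]) ω ∂μ

section GaussianMoments

lemma integrable_pow_mul_exp_neg_mul_sq {b : ℝ} (hb : 0 < b) (n : ℕ) :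
    Integrable fun x : ℝ ↦ x ^ n * exp (-b * x ^ 2) := by
  simpa [rpow_natCast] using
    integrable_rpow_mul_exp_neg_mul_sq hb (s := n) (by linarith [n.cast_nonneg (α := ℝ)])

lemma integral_pow_add_two_mul_exp_neg_mul_sq {b : ℝ} (hb : 0 < b) (n : ℕ) :
    ∫ x, x ^ (n + 2) * exp (-b * x ^ 2) = (n + 1) / (2 * b) * ∫ x, x ^ n * exp (-b * x ^ 2) := by
  have hderiv (x : ℝ) : HasDerivAt (fun y ↦ y ^ (n + 1) * exp (-b * y ^ 2))
      ((n + 1) * (x ^ n * exp (-b * x ^ 2)) - 2 * b * (x ^ (n + 2) * exp (-b * x ^ 2))) x := by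
    have hpow : HasDerivAt (fun y : ℝ ↦ y ^ (n + 1)) ((n + 1) * x ^ n) x := by
      simpa using hasDerivAt_pow (n + 1) x
    have hexp : HasDerivAt (fun y ↦ -b * y ^ 2) (-b * (2 * x)) x := by
      simpa using (hasDerivAt_pow 2 x).const_mul (-b)
    exact (hpow.mul hexp.exp).congr_deriv (by ring)
  have hn := (integrable_pow_mul_exp_neg_mul_sq hb n).const_mul ((n : ℝ) + 1)
  have hn2 := (integrable_pow_mul_exp_neg_mul_sq hb (n + 2)).const_mul (2 * b)
  have key := integral_eq_zero_of_hasDerivAt_of_integrable hderiv (hn.sub hn2)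
    (integrable_pow_mul_exp_neg_mul_sq hb (n + 1))
  rw [integral_sub hn hn2, integral_const_mul, integral_const_mul] at key
  rw [div_mul_eq_mul_div, eq_div_iff (by positivity)]
  linear_combination -key

variable {v : ℝ≥0}

lemma integrable_pow_gaussianReal (m : ℝ) (n : ℕ) :
    Integrable (fun x ↦ x ^ n) (gaussianReal m v) := by
  have h := (memLp_id_gaussianReal (μ := m) (v := v) n).integrable_norm_pow'
  exact (integrable_norm_iff (by fun_prop)).1 (by simpa using h)

lemma integral_pow_add_two_gaussianReal (n : ℕ) :
    ∫ x, x ^ (n + 2) ∂gaussianReal 0 v = (n + 1) * v * ∫ x, x ^ n ∂gaussianReal 0 v := by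
  rcases eq_or_ne v 0 with rfl | hv
  · simp [gaussianReal_zero_var]
  have hb : 0 < (2 * (v : ℝ))⁻¹ := by positivity
  have hdensity (k : ℕ) : ∫ x, x ^ k ∂gaussianReal 0 v =
      (√(2 * π * v))⁻¹ * ∫ x, x ^ k * exp (-(2 * (v : ℝ))⁻¹ * x ^ 2) := by
    rw [integral_gaussianReal_eq_integral_smul hv, ← integral_const_mul]
    congr with x
    rw [gaussianPDFReal_def, smul_eq_mul]
    ring_nf
  rw [hdensity, hdensity, integral_pow_add_two_mul_exp_neg_mul_sq hb]
  field_simp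

lemma integral_sq_gaussianReal : ∫ x, x ^ 2 ∂gaussianReal 0 v = v := by
  simpa using integral_pow_add_two_gaussianReal (v := v) 0

lemma integral_pow_four_gaussianReal : ∫ x, x ^ 4 ∂gaussianReal 0 v = 3 * v ^ 2 := by
  rw [integral_pow_add_two_gaussianReal 2, integral_sq_gaussianReal]
  ring

lemma integral_sq_sub_sq_gaussianReal : ∫ x, (x ^ 2 - v) ^ 2 ∂gaussianReal 0 v = 2 * v ^ 2 := by
  have h4 := integrable_pow_gaussianReal (v := v) 0 4
  have h2 := (integrable_pow_gaussianReal (v := v) 0 2).const_mul (2 * v)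
  have hexpand : (fun x : ℝ ↦ (x ^ 2 - v) ^ 2) = fun x ↦ x ^ 4 - 2 * v * x ^ 2 + (v : ℝ) ^ 2 := by
    ext x; ring
  have h42 : Integrable (fun x : ℝ ↦ x ^ 4 - 2 * v * x ^ 2) (gaussianReal 0 v) := h4.sub h2
  rw [hexpand, integral_add h42 (integrable_const _), integral_sub h4 h2, integral_const_mul,
    integral_pow_four_gaussianReal, integral_sq_gaussianReal]
  simp
  ring

lemma memLp_two_pow_gaussianReal (m : ℝ) (n : ℕ) :
    MemLp (fun x ↦ x ^ n) 2 (gaussianReal m v) :=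
  (memLp_two_iff_integrable_sq (by fun_prop)).2 <| by
    simpa [← pow_mul] using integrable_pow_gaussianReal (v := v) m (n * 2)

lemma integral_eq_zero_of_odd_gaussianReal {g : ℝ → ℝ} (hg : ∀ x, g (-x) = -g x) :
    ∫ x, g x ∂gaussianReal 0 v = 0 := by
  have h : ∫ x, g x ∂(gaussianReal 0 v).map (fun x ↦ -x) = ∫ x, g (-x) ∂gaussianReal 0 v :=
    integral_map_equiv (MeasurableEquiv.neg ℝ) g
  rw [gaussianReal_map_neg, neg_zero] at h
  simp only [hg, integral_neg] at h
  linarith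

end GaussianMoments

namespace ProbabilityTheory

variable {Ω 𝓧 : Type*} [MeasurableSpace Ω] [MeasurableSpace 𝓧] {μ : Measure Ω}

lemma HasLaw.integral_fun_comp {ν : Measure 𝓧} {X : Ω → 𝓧} (hX : HasLaw X ν μ) {f : 𝓧 → ℝ}
    (hf : AEStronglyMeasurable f ν) :
    ∫ ω, f (X ω) ∂μ = ∫ x, f x ∂ν :=
  hX.integral_comp hf

lemma HasLaw.integrable_fun_comp {ν : Measure 𝓧} {X : Ω → 𝓧} (hX : HasLaw X ν μ) {f : 𝓧 → ℝ}
    (hf : Integrable f ν) :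
    Integrable (fun ω ↦ f (X ω)) μ :=
  (hX.map_eq ▸ hf).comp_aemeasurable hX.aemeasurable

lemma HasLaw.memLp_fun_comp {ν : Measure 𝓧} {X : Ω → 𝓧} (hX : HasLaw X ν μ) {f : 𝓧 → ℝ}
    {p : ℝ≥0∞} (hf : MemLp f p ν) :
    MemLp (fun ω ↦ f (X ω)) p μ :=
  (hX.map_eq ▸ hf).comp_of_map hX.aemeasurable

lemma IndepFun.memLp_two_mul {X Y : Ω → ℝ} (hXY : IndepFun X Y μ) (hX : MemLp X 2 μ)
    (hY : MemLp Y 2 μ) :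
    MemLp (X * Y) 2 μ := by
  refine (memLp_two_iff_integrable_sq (hX.1.mul hY.1)).2 ?_
  have h : Integrable (fun ω ↦ X ω ^ 2 * Y ω ^ 2) μ :=
    (hXY.comp (measurable_id.pow_const 2) (measurable_id.pow_const 2)).integrable_mul
      hX.integrable_sq hY.integrable_sq
  simpa [mul_pow] using h

end ProbabilityTheory

section ConditionalVariance

variable {Ω β : Type*} [MeasurableSpace Ω] [MeasurableSpace β] {μ : Measure Ω} {W : Ω → β}

lemma integral_add_sq_of_integral_mul_eq_zero {S T : Ω → ℝ} (hS : MemLp S 2 μ) (hT : MemLp T 2 μ)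
    (hST : ∫ ω, S ω * T ω ∂μ = 0) :
    ∫ ω, (S ω + T ω) ^ 2 ∂μ = ∫ ω, S ω ^ 2 ∂μ + ∫ ω, T ω ^ 2 ∂μ := by
  have hSS := hS.integrable_sq
  have hTT := hT.integrable_sq
  have hST' : Integrable (fun ω ↦ 2 * (S ω * T ω)) μ := (hS.integrable_mul hT).const_mul 2
  have hSST : Integrable (fun ω ↦ S ω ^ 2 + 2 * (S ω * T ω)) μ := hSS.add hST'
  simp_rw [add_sq, mul_assoc]
  rw [integral_add hSST hTT, integral_add hSS hST', integral_const_mul, hST]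
  ring

variable [IsFiniteMeasure μ]

lemma eCondVar_eq_integral_sq_sub (hW : Measurable W) {Y g : Ω → ℝ}
    (hg : μ[Y | MeasurableSpace.comap W inferInstance] =ᵐ[μ] g) :
    eCondVar μ Y W = ∫ ω, (Y ω - g ω) ^ 2 ∂μ := by
  unfold eCondVar
  rw [integral_condExp hW.comap_le]
  exact integral_congr_ae (hg.mono fun ω h ↦ by simp [h])

lemma condExp_comap_of_indepFun {R : Ω → ℝ} (hW : Measurable W) (hR : Measurable R)
    (hRW : IndepFun R W μ) :
    μ[R | MeasurableSpace.comap W inferInstance] =ᵐ[μ] fun _ ↦ μ[R] :=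
  condExp_indep_eq hR.comap_le hW.comap_le (comap_measurable R).stronglyMeasurable hRW

lemma condExp_comp_add_of_indepFun (hW : Measurable W) {f : β → ℝ} (hf : Measurable f)
    (hfW : Integrable (fun ω ↦ f (W ω)) μ) {U : Ω → ℝ} (hU : Measurable U) (hUi : Integrable U μ)
    (hUW : IndepFun U W μ) :
    μ[fun ω ↦ f (W ω) + U ω | MeasurableSpace.comap W inferInstance] =ᵐ[μ]
      fun ω ↦ f (W ω) + μ[U] := by
  filter_upwards [condExp_add hfW hUi (MeasurableSpace.comap W inferInstance),
    condExp_comap_of_indepFun hW hU hUW] with ω hadd hU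
  change μ[(fun ω ↦ f (W ω)) + U | MeasurableSpace.comap W inferInstance] ω = _
  rw [hadd, Pi.add_apply, hU, condExp_of_stronglyMeasurable (f := fun ω ↦ f (W ω)) hW.comap_le
    (hf.comp (comap_measurable W)).stronglyMeasurable hfW]

lemma condExp_comp_mul_of_indepFun (hW : Measurable W) {g : β → ℝ} (hg : Measurable g)
    {U : Ω → ℝ} (hU : Measurable U) (hUi : Integrable U μ) (hUW : IndepFun U W μ)
    (hgU : Integrable (fun ω ↦ g (W ω) * U ω) μ) :
    μ[fun ω ↦ g (W ω) * U ω | MeasurableSpace.comap W inferInstance] =ᵐ[μ]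
      fun ω ↦ g (W ω) * μ[U] := by
  filter_upwards [condExp_mul_of_stronglyMeasurable_left (f := fun ω ↦ g (W ω))
    (hg.comp (comap_measurable W)).stronglyMeasurable hgU hUi,
    condExp_comap_of_indepFun hW hU hUW] with ω hmul hU
  change μ[(fun ω ↦ g (W ω)) * U | MeasurableSpace.comap W inferInstance] ω = _
  rw [hmul, Pi.mul_apply, hU]

lemma eCondVar_comp_add_of_indepFun (hW : Measurable W) {f : β → ℝ} (hf : Measurable f)
    (hfW : Integrable (fun ω ↦ f (W ω)) μ) {U : Ω → ℝ} (hU : Measurable U) (hUi : Integrable U μ)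
    (hUW : IndepFun U W μ) :
    eCondVar μ (fun ω ↦ f (W ω) + U ω) W = Var[U; μ] := by
  rw [eCondVar_eq_integral_sq_sub hW (condExp_comp_add_of_indepFun hW hf hfW hU hUi hUW),
    variance_eq_integral hU.aemeasurable]
  simp

end ConditionalVariance

section QuadraticChain

variable {Ω : Type*} [MeasurableSpace Ω] {μ : Measure Ω} {Z U W : Ω → ℝ} {s v w : ℝ≥0}

lemma condExp_quadraticChain (hZm : Measurable Z) (hUm : Measurable U) (hWm : Measurable W)
    [IsFiniteMeasure μ] (hZ : HasLaw Z (gaussianReal 0 s) μ) (hU : HasLaw U (gaussianReal 0 v) μ)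
    (hW : HasLaw W (gaussianReal 0 w) μ) (hZU : IndepFun Z U μ)
    (hZUW : IndepFun (fun ω ↦ (Z ω, U ω)) W μ) :
    μ[fun ω ↦ (Z ω ^ 2 / 2 + U ω) ^ 2 / 3 + W ω | MeasurableSpace.comap Z inferInstance] =ᵐ[μ]
      fun ω ↦ Z ω ^ 4 / 12 + v / 3 := by
  have hU1 : Integrable U μ := by
    simpa using hU.integrable_fun_comp (integrable_pow_gaussianReal 0 1)
  have hW1 : Integrable W μ := by
    simpa using hW.integrable_fun_comp (integrable_pow_gaussianReal 0 1)
  have hZ4 : Integrable (fun ω ↦ Z ω ^ 4 / 12) μ :=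
    hZ.integrable_fun_comp ((integrable_pow_gaussianReal 0 4).div_const 12)
  have hZ2U : Integrable (fun ω ↦ Z ω ^ 2 / 3 * U ω) μ :=
    (hZU.comp (by fun_prop : Measurable fun x : ℝ ↦ x ^ 2 / 3) measurable_id).integrable_mul
      (hZ.integrable_fun_comp ((integrable_pow_gaussianReal 0 2).div_const 3)) hU1
  have hU2 : Integrable (fun ω ↦ U ω ^ 2 / 3) μ :=
    hU.integrable_fun_comp ((integrable_pow_gaussianReal 0 2).div_const 3)
  have hZ4cond := condExp_of_stronglyMeasurable (f := fun ω ↦ Z ω ^ 4 / 12) hZm.comap_le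
    ((by fun_prop : Measurable fun x : ℝ ↦ x ^ 4 / 12).comp (comap_measurable Z)).stronglyMeasurable
    hZ4
  have hZ2Ucond := condExp_comp_mul_of_indepFun hZm (by fun_prop : Measurable fun x : ℝ ↦ x ^ 2 / 3)
    hUm hU1 hZU.symm hZ2U
  have hU2cond := condExp_comap_of_indepFun (R := fun ω ↦ U ω ^ 2 / 3) hZm (by fun_prop)
    (hZU.symm.comp (by fun_prop : Measurable fun x : ℝ ↦ x ^ 2 / 3) measurable_id)
  have hWcond := condExp_comap_of_indepFun hZm hWm (hZUW.comp measurable_fst measurable_id).symm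
  have hsplit : (fun ω ↦ (Z ω ^ 2 / 2 + U ω) ^ 2 / 3 + W ω) = (fun ω ↦ Z ω ^ 4 / 12) +
      (fun ω ↦ Z ω ^ 2 / 3 * U ω) + (fun ω ↦ U ω ^ 2 / 3) + W := by
    ext ω; simp only [Pi.add_apply]; ring
  rw [hsplit]
  filter_upwards [condExp_add ((hZ4.add hZ2U).add hU2) hW1 (MeasurableSpace.comap Z inferInstance),
    condExp_add (hZ4.add hZ2U) hU2 (MeasurableSpace.comap Z inferInstance),
    condExp_add hZ4 hZ2U (MeasurableSpace.comap Z inferInstance), hZ2Ucond, hU2cond, hWcond]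
    with ω h₁ h₂ h₃ h₄ h₅ h₆
  rw [h₁, Pi.add_apply, h₂, Pi.add_apply, h₃, Pi.add_apply, hZ4cond, h₄, h₅, h₆,
    hU.integral_eq, hW.integral_eq, integral_id_gaussianReal, integral_id_gaussianReal,
    hU.integral_fun_comp (f := fun x ↦ x ^ 2 / 3) (by fun_prop), integral_div,
    integral_sq_gaussianReal]
  simp

lemma memLp_two_sq_mul (hZ : HasLaw Z (gaussianReal 0 s) μ) (hU : HasLaw U (gaussianReal 0 v) μ)
    (hZU : IndepFun Z U μ) :
    MemLp (fun ω ↦ Z ω ^ 2 * U ω) 2 μ :=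
  (hZU.comp (measurable_id.pow_const 2) measurable_id).memLp_two_mul
    (hZ.memLp_fun_comp (memLp_two_pow_gaussianReal 0 2))
    (by simpa using hU.memLp_fun_comp (memLp_two_pow_gaussianReal 0 1))

lemma integral_sq_mul_add_sq_sub_sq (hZ : HasLaw Z (gaussianReal 0 s) μ)
    (hU : HasLaw U (gaussianReal 0 v) μ) (hZU : IndepFun Z U μ) :
    ∫ ω, (Z ω ^ 2 * U ω + (U ω ^ 2 - v)) ^ 2 ∂μ = 3 * (s : ℝ) ^ 2 * v + 2 * (v : ℝ) ^ 2 := by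
  have hU2 : MemLp (fun ω ↦ U ω ^ 2 - v) 2 μ :=
    hU.memLp_fun_comp ((memLp_two_pow_gaussianReal 0 2).sub (memLp_const _))
  have horth : ∫ ω, Z ω ^ 2 * U ω * (U ω ^ 2 - v) ∂μ = 0 := by
    calc _ = ∫ ω, Z ω ^ 2 * (U ω * (U ω ^ 2 - v)) ∂μ := by
          simp_rw [mul_assoc]
      _ = (∫ ω, Z ω ^ 2 ∂μ) * ∫ ω, U ω * (U ω ^ 2 - v) ∂μ :=
          hZU.integral_fun_comp_mul_comp (f := fun x ↦ x ^ 2) (g := fun x : ℝ ↦ x * (x ^ 2 - v))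
            hZ.aemeasurable hU.aemeasurable (by fun_prop) (by fun_prop)
      _ = 0 := by
          rw [hU.integral_fun_comp (f := fun x : ℝ ↦ x * (x ^ 2 - v)) (by fun_prop),
            integral_eq_zero_of_odd_gaussianReal (fun x ↦ by ring), mul_zero]
  have hZ4U2 : ∫ ω, (Z ω ^ 2 * U ω) ^ 2 ∂μ = 3 * (s : ℝ) ^ 2 * v := by
    simp_rw [mul_pow, ← pow_mul, Nat.reduceMul]
    rw [hZU.integral_fun_comp_mul_comp (f := fun x ↦ x ^ 4) (g := fun x ↦ x ^ 2)
      hZ.aemeasurable hU.aemeasurable (by fun_prop) (by fun_prop),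
      hZ.integral_fun_comp (f := fun x ↦ x ^ 4) (by fun_prop), integral_pow_four_gaussianReal,
      hU.integral_fun_comp (f := fun x ↦ x ^ 2) (by fun_prop), integral_sq_gaussianReal]
  rw [integral_add_sq_of_integral_mul_eq_zero (memLp_two_sq_mul hZ hU hZU) hU2 horth, hZ4U2,
    hU.integral_fun_comp (f := fun x ↦ (x ^ 2 - v) ^ 2) (by fun_prop),
    integral_sq_sub_sq_gaussianReal]

lemma integral_sq_sub_condExp_quadraticChain (hZ : HasLaw Z (gaussianReal 0 s) μ)
    (hU : HasLaw U (gaussianReal 0 v) μ) (hW : HasLaw W (gaussianReal 0 w) μ) (hZU : IndepFun Z U μ)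
    (hZUW : IndepFun (fun ω ↦ (Z ω, U ω)) W μ) :
    ∫ ω, ((Z ω ^ 2 / 2 + U ω) ^ 2 / 3 + W ω - (Z ω ^ 4 / 12 + v / 3)) ^ 2 ∂μ =
      (3 * (s : ℝ) ^ 2 * v + 2 * (v : ℝ) ^ 2) / 9 + w := by
  have hresidual (ω : Ω) : (Z ω ^ 2 / 2 + U ω) ^ 2 / 3 + W ω - (Z ω ^ 4 / 12 + v / 3) =
      (Z ω ^ 2 * U ω + (U ω ^ 2 - v)) / 3 + W ω := by
    ring
  have hU2 : MemLp (fun ω ↦ U ω ^ 2 - v) 2 μ :=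
    hU.memLp_fun_comp ((memLp_two_pow_gaussianReal 0 2).sub (memLp_const _))
  have hT : MemLp (fun ω ↦ (Z ω ^ 2 * U ω + (U ω ^ 2 - v)) / 3) 2 μ := by
    simpa [div_eq_mul_inv] using ((memLp_two_sq_mul hZ hU hZU).add hU2).mul_const 3⁻¹
  have hW2 : MemLp W 2 μ := by simpa using hW.memLp_fun_comp (memLp_two_pow_gaussianReal 0 1)
  have horth : ∫ ω, (Z ω ^ 2 * U ω + (U ω ^ 2 - v)) / 3 * W ω ∂μ = 0 := by
    have h := hZUW.integral_fun_comp_mul_comp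
      (f := fun p : ℝ × ℝ ↦ (p.1 ^ 2 * p.2 + (p.2 ^ 2 - v)) / 3) (g := id)
      (by fun_prop) hW.aemeasurable (by fun_prop) (by fun_prop)
    simpa [hW.integral_eq] using h
  simp_rw [hresidual]
  rw [integral_add_sq_of_integral_mul_eq_zero hT hW2 horth]
  simp_rw [div_pow]
  rw [integral_div, integral_sq_mul_add_sq_sub_sq hZ hU hZU,
    hW.integral_fun_comp (f := fun x ↦ x ^ 2) (by fun_prop), integral_sq_gaussianReal]
  ring

lemma eCondVar_quadraticChain (hZm : Measurable Z) (hUm : Measurable U) (hWm : Measurable W)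
    [IsFiniteMeasure μ] (hZ : HasLaw Z (gaussianReal 0 s) μ) (hU : HasLaw U (gaussianReal 0 v) μ)
    (hW : HasLaw W (gaussianReal 0 w) μ) (hZU : IndepFun Z U μ)
    (hZUW : IndepFun (fun ω ↦ (Z ω, U ω)) W μ) :
    eCondVar μ (fun ω ↦ (Z ω ^ 2 / 2 + U ω) ^ 2 / 3 + W ω) Z =
      (3 * (s : ℝ) ^ 2 * v + 2 * (v : ℝ) ^ 2) / 9 + w := by
  rw [eCondVar_eq_integral_sq_sub hZm (condExp_quadraticChain hZm hUm hWm hZ hU hW hZU hZUW),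
    integral_sq_sub_condExp_quadraticChain hZ hU hW hZU hZUW]

end QuadraticChain

/-- Same Markov chain `X₁ → X₂ → X₃` but with `Var(z₃) = 1/3`: the identifiability
condition fails at the second step, since
`E[Var(X₃|X₁)] = 1/3 + 1/3 − 1/81 < 2/3 = E[Var(X₂|X₁)]`, so the
minimum-residual-variance procedure selects `X₃` before `X₂` and returns an incorrect
topological order. -/
theorem unequal_variance_nonident
    {Ω : Type*} [MeasurableSpace Ω] (μ : Measure Ω) [IsProbabilityMeasure μ]
    (z : Fin 3 → Ω → ℝ) (hz : ∀ i, Measurable (z i))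
    (hindep : iIndepFun z μ)
    (hlaw₁ : Measure.map (z 0) μ = gaussianReal 0 1)
    (hlaw₂ : Measure.map (z 1) μ = gaussianReal 0 (2 / 3))
    (hlaw₃ : Measure.map (z 2) μ = gaussianReal 0 (1 / 3))
    (X₁ X₂ X₃ : Ω → ℝ)
    (h₁ : X₁ = z 0) (h₂ : ∀ ω, X₂ ω = X₁ ω ^ 2 / 2 + z 1 ω)
    (h₃ : ∀ ω, X₃ ω = X₂ ω ^ 2 / 3 + z 2 ω) :
    eCondVar μ X₂ X₁ = 2 / 3 ∧
    eCondVar μ X₃ X₁ = 1 / 3 + 1 / 3 - 1 / 81 ∧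
    eCondVar μ X₃ X₁ < eCondVar μ X₂ X₁ := by
  subst h₁
  have hZ : HasLaw (z 0) (gaussianReal 0 1) μ := ⟨(hz 0).aemeasurable, hlaw₁⟩
  have hU : HasLaw (z 1) (gaussianReal 0 (2 / 3)) μ := ⟨(hz 1).aemeasurable, hlaw₂⟩
  have hW : HasLaw (z 2) (gaussianReal 0 (1 / 3)) μ := ⟨(hz 2).aemeasurable, hlaw₃⟩
  have hZU : IndepFun (z 0) (z 1) μ := hindep.indepFun (by decide)
  have hX₂ : X₂ = fun ω ↦ z 0 ω ^ 2 / 2 + z 1 ω := funext h₂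
  have hX₃ : X₃ = fun ω ↦ (z 0 ω ^ 2 / 2 + z 1 ω) ^ 2 / 3 + z 2 ω := by
    ext ω; rw [h₃, h₂]
  have hvar₂ : eCondVar μ X₂ (z 0) = 2 / 3 := by
    rw [hX₂, eCondVar_comp_add_of_indepFun (hz 0) (by fun_prop)
      (hZ.integrable_fun_comp ((integrable_pow_gaussianReal 0 2).div_const 2)) (hz 1)
      (by simpa using hU.integrable_fun_comp (integrable_pow_gaussianReal 0 1)) hZU.symm,
      hU.variance_eq, variance_id_gaussianReal]
    norm_num
  have hvar₃ : eCondVar μ X₃ (z 0) = 1 / 3 + 1 / 3 - 1 / 81 := by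
    rw [hX₃, eCondVar_quadraticChain (hz 0) (hz 1) (hz 2) hZ hU hW hZU
      (hindep.indepFun_prodMk hz 0 1 2 (by decide) (by decide))]
    norm_num
  exact ⟨hvar₂, hvar₃, by rw [hvar₂, hvar₃]; norm_num⟩
end
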